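/- Let D(t) be a differentiable family of symmetric positive definite k×k matrices, and define M(t) ∈ ℝ^{m×m} as the block matrix [[0,0],[0,D(t)]]. Then the derivative of the Moore–Penrose pseudoinverse satisfies d/dt M(t)^† = -M(t)^† (dM(t)/dt) M(t)^†. -/

import Mathlib

/-!
Inversion is differentiable on the units of any complete normed algebra, with derivative
`h ↦ -x⁻¹ h x⁻¹`; equipping matrices with an operator norm gives `d(D⁻¹) = -D⁻¹ dD D⁻¹` for the
invertible block `D`. Padding by zero blocks commutes with products, negation and transposition,
so the Penrose conditions and the derivative formula for `M = [[0,0],[0,D]]` reduce to those for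
`D`, whose pseudoinverse is its inverse.
-/

open Matrix

/-- `P` is the Moore–Penrose pseudoinverse of `M`: the four Penrose conditions. -/
def IsMoorePenrose {m : Type*} [Fintype m] [DecidableEq m]
    (M P : Matrix m m ℝ) : Prop :=
  M * P * M = M ∧ P * M * P = P ∧ (M * P)ᵀ = M * P ∧ (P * M)ᵀ = P * M

section Derivative

variable {𝕜 : Type*} [NontriviallyNormedField 𝕜] {n : Type*} [Fintype n] [DecidableEq n]

attribute [local instance] Matrix.linftyOpNormedRing Matrix.linftyOpNormedAlgebra

theorem Matrix.hasDerivAt_of_hasDerivAt_apply {A : 𝕜 → Matrix n n 𝕜} {A' : Matrix n n 𝕜}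
    {t : 𝕜} (h : ∀ i j, HasDerivAt (fun s => A s i j) (A' i j) t) : HasDerivAt A A' t := by
  have hsum : ∀ B : Matrix n n 𝕜, B = ∑ i, ∑ j, B i j • single i j (1 : 𝕜) := fun B => by
    simpa [smul_single] using matrix_eq_sum_single B
  rw [funext fun s => hsum (A s), hsum A']
  exact .fun_sum fun i _ => .fun_sum fun j _ => (h i j).smul_const _

variable [CompleteSpace 𝕜]

theorem HasDerivAt.matrix_apply {A : 𝕜 → Matrix n n 𝕜} {A' : Matrix n n 𝕜} {t : 𝕜}
    (h : HasDerivAt A A' t) (i j : n) : HasDerivAt (fun s => A s i j) (A' i j) t :=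
  (LinearMap.toContinuousLinearMap (entryLinearMap 𝕜 𝕜 i j)).hasFDerivAt.comp_hasDerivAt t h

theorem Matrix.hasDerivAt_inv {A : 𝕜 → Matrix n n 𝕜} {A' : Matrix n n 𝕜} {t : 𝕜}
    (hA : IsUnit (A t).det) (h : HasDerivAt A A' t) :
    HasDerivAt (fun s => (A s)⁻¹) (-(A t)⁻¹ * A' * (A t)⁻¹) t := by
  -- Completeness must be stated for the operator-norm uniformity, not the global one on matrices.
  have : HasSummableGeomSeries (Matrix n n 𝕜) :=
    @instHasSummableGeomSeriesOfCompleteSpace _ _ (FiniteDimensional.complete 𝕜 _)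
  obtain ⟨u, hu⟩ := (isUnit_iff_isUnit_det _).2 hA
  have hinv : (fun s => (A s)⁻¹) = Ring.inverse ∘ A :=
    funext fun s => nonsing_inv_eq_ringInverse _
  have hu_inv : (↑u⁻¹ : Matrix n n 𝕜) = (A t)⁻¹ := by rw [coe_units_inv, hu]
  rw [hinv, neg_mul, neg_mul, ← hu_inv]
  exact (hu ▸ hasFDerivAt_ringInverse (𝕜 := 𝕜) u).comp_hasDerivAt t h

theorem Matrix.hasDerivAt_inv_apply {A : 𝕜 → Matrix n n 𝕜} {A' : Matrix n n 𝕜} {t : 𝕜}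
    (hA : IsUnit (A t).det) (h : ∀ i j, HasDerivAt (fun s => A s i j) (A' i j) t) (i j : n) :
    HasDerivAt (fun s => (A s)⁻¹ i j) ((-(A t)⁻¹ * A' * (A t)⁻¹) i j) t :=
  (hasDerivAt_inv hA (hasDerivAt_of_hasDerivAt_apply h)).matrix_apply i j

end Derivative

section ZeroBlocks

variable {R : Type*} {m n : Type*}

theorem Matrix.fromBlocks_zero_mul_fromBlocks_zero [Fintype m] [Fintype n]
    [NonUnitalNonAssocSemiring R] (A B : Matrix n n R) :
    fromBlocks (0 : Matrix m m R) 0 0 A * fromBlocks 0 0 0 B = fromBlocks 0 0 0 (A * B) := by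
  simp [fromBlocks_multiply]

theorem Matrix.neg_fromBlocks_zero [NegZeroClass R] (A : Matrix n n R) :
    -fromBlocks (0 : Matrix m m R) 0 0 A = fromBlocks 0 0 0 (-A) := by
  ext (i | i) (j | j) <;> simp

theorem Matrix.transpose_fromBlocks_zero [Zero R] (A : Matrix n n R) :
    (fromBlocks (0 : Matrix m m R) 0 0 A)ᵀ = fromBlocks 0 0 0 Aᵀ := by
  simp [fromBlocks_transpose]

theorem HasDerivAt.fromBlocks_zero_apply {𝕜 : Type*} [NontriviallyNormedField 𝕜]
    {A : 𝕜 → Matrix n n 𝕜} {A' : Matrix n n 𝕜} {t : 𝕜}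
    (h : ∀ i j, HasDerivAt (fun s => A s i j) (A' i j) t) (i j : m ⊕ n) :
    HasDerivAt (fun s => fromBlocks (0 : Matrix m m 𝕜) 0 0 (A s) i j)
      (fromBlocks (0 : Matrix m m 𝕜) 0 0 A' i j) t := by
  rcases i with i | i <;> rcases j with j | j
  · exact hasDerivAt_const _ _
  · exact hasDerivAt_const _ _
  · exact hasDerivAt_const _ _
  · exact h i j

end ZeroBlocks

section MoorePenrose

variable {m n : Type*} [Fintype m] [DecidableEq m] [Fintype n] [DecidableEq n]

theorem isMoorePenrose_nonsing_inv {A : Matrix n n ℝ} (hA : IsUnit A.det) :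
    IsMoorePenrose A A⁻¹ := by
  refine ⟨?_, ?_, ?_, ?_⟩
  · rw [mul_nonsing_inv _ hA, Matrix.one_mul]
  · rw [nonsing_inv_mul _ hA, Matrix.one_mul]
  · rw [mul_nonsing_inv _ hA, transpose_one]
  · rw [nonsing_inv_mul _ hA, transpose_one]

theorem IsMoorePenrose.fromBlocks_zero {A P : Matrix n n ℝ} (h : IsMoorePenrose A P) :
    IsMoorePenrose (fromBlocks (0 : Matrix m m ℝ) 0 0 A) (fromBlocks 0 0 0 P) := by
  obtain ⟨h₁, h₂, h₃, h₄⟩ := h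
  simp only [IsMoorePenrose, fromBlocks_zero_mul_fromBlocks_zero, transpose_fromBlocks_zero,
    h₁, h₂, h₃, h₄, and_self]

end MoorePenrose

/-- Let `D(t)` be a differentiable family of symmetric positive definite `k×k`
matrices and `M(t) = [[0,0],[0,D(t)]]`. Then `M(t)† = [[0,0],[0,D(t)⁻¹]]` is the
Moore–Penrose pseudoinverse of `M(t)`, and its derivative satisfies
`d/dt M(t)† = -M(t)† (dM(t)/dt) M(t)†` (stated entrywise). -/
theorem deriv_pseudoinverse_block (p k : ℕ)
    (D D' : ℝ → Matrix (Fin k) (Fin k) ℝ)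
    (hD : ∀ t, (D t).PosDef)
    (hdiff : ∀ t i j, HasDerivAt (fun s => D s i j) (D' t i j) t) :
    (∀ t, IsMoorePenrose
        (Matrix.fromBlocks (0 : Matrix (Fin p) (Fin p) ℝ) (0 : Matrix (Fin p) (Fin k) ℝ)
          (0 : Matrix (Fin k) (Fin p) ℝ) (D t))
        (Matrix.fromBlocks (0 : Matrix (Fin p) (Fin p) ℝ) (0 : Matrix (Fin p) (Fin k) ℝ)
          (0 : Matrix (Fin k) (Fin p) ℝ) (D t)⁻¹)) ∧
    (∀ t i j, HasDerivAt
      (fun s => (Matrix.fromBlocks (0 : Matrix (Fin p) (Fin p) ℝ)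
          (0 : Matrix (Fin p) (Fin k) ℝ) (0 : Matrix (Fin k) (Fin p) ℝ) (D s)⁻¹) i j)
      ((-(Matrix.fromBlocks (0 : Matrix (Fin p) (Fin p) ℝ) (0 : Matrix (Fin p) (Fin k) ℝ)
            (0 : Matrix (Fin k) (Fin p) ℝ) (D t)⁻¹) *
          (Matrix.fromBlocks (0 : Matrix (Fin p) (Fin p) ℝ) (0 : Matrix (Fin p) (Fin k) ℝ)
            (0 : Matrix (Fin k) (Fin p) ℝ) (D' t)) *
          (Matrix.fromBlocks (0 : Matrix (Fin p) (Fin p) ℝ) (0 : Matrix (Fin p) (Fin k) ℝ)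
            (0 : Matrix (Fin k) (Fin p) ℝ) (D t)⁻¹)) i j) t) := by
  have hdet : ∀ t, IsUnit (D t).det := fun t => (hD t).det_pos.ne'.isUnit
  refine ⟨fun t => (isMoorePenrose_nonsing_inv (hdet t)).fromBlocks_zero, fun t i j => ?_⟩
  rw [neg_fromBlocks_zero, fromBlocks_zero_mul_fromBlocks_zero,
    fromBlocks_zero_mul_fromBlocks_zero]
  exact HasDerivAt.fromBlocks_zero_apply (hasDerivAt_inv_apply (hdet t) (hdiff t)) i j
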